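/- arXiv:1704.08483 — 2 statements merged into one kernel-verified Lean document; each statement's English description precedes it below -/
import Mathlib

section
/- For every real number e with e ≠ 5, the line through the points (e, -e) and (e-10, e-10) is tangent to the parabola y = -x²/20 - 5. -/
/-- The line through `(e, -e)` and `(e-10, e-10)` is tangent to the parabola
`y = -x²/20 - 5`: it meets it in exactly one point. -/
theorem string_tangent_to_parabola (e : ℝ) (he : e ≠ 5) :
    ∃! x : ℝ, (x - e) * (2 * e - 10) = ((-x ^ 2 / 20 - 5) - (-e)) * ((e - 10) - e) := by
  refine ⟨2 * e - 10, by ring, ?_⟩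
  intro y hy
  have h : (y - (2 * e - 10)) ^ 2 = 0 := by nlinarith [hy]
  have := pow_eq_zero_iff (n := 2) (by norm_num) |>.mp h
  linarith
end

section
/- For every real e ≠ 5, the foot G of the perpendicular from F = (0, -10) to the line through C = (e,-e) and C'' = (e-10, e-10) lies on the line y = -5 (the mid-parallel of the directrix y = 0 and the line y = -10). -/
/-- The foot `G` of the perpendicular from `F = (0, -10)` to the string through
`C = (e, -e)` and `C'' = (e-10, e-10)` lies on the mid-parallel `y = -5` (for `e ≠ 5`).
`G` is characterized by lying on the line `C C''` and `G - F` being perpendicular to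
the direction `C'' - C = (-10, 2e - 10)`. -/
theorem foot_on_midparallel (e : ℝ) (he : e ≠ 5) (G : ℝ × ℝ)
    (honline : (G.1 - e) * ((e - 10) - (-e)) = (G.2 - (-e)) * ((e - 10) - e))
    (hperp : (G.1 - 0) * ((e - 10) - e) + (G.2 - (-10)) * ((e - 10) - (-e)) = 0) :
    G.2 = -5 := by
  have h : (G.2 + 5) * ((2*e-10)^2 + 100) = 0 := by
    linear_combination (2*e-10) * hperp + 10 * honline
  have hpos : (2*e-10)^2 + 100 > 0 := by positivity
  have := mul_eq_zero.mp h
  rcases this with h1 | h2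
  · linarith
  · linarith
end
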